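/- If the ∃-player has a winning strategy in the graph game on (G, C, s, R) constructed from the restricted quantified Boolean formula Q, then Q is true. -/

import Mathlib

namespace PhutballQBF

/-- A literal: a variable `xₗ` (`pos l`) or its negation `¬xₗ` (`neg l`). -/
inductive Lit where
  | pos (l : ℕ)
  | neg (l : ℕ)
deriving DecidableEq

/-- The index of the variable occurring in a literal. -/
def Lit.var : Lit → ℕ
  | .pos l => l
  | .neg l => l

/-- Evaluation of a literal under a Boolean assignment. -/
def Lit.eval (σ : ℕ → Bool) : Lit → Bool
  | .pos l => σ l
  | .neg l => !(σ l)

/-- Well-formedness of the 3CNF `F = F₁ ∧ ⋯ ∧ F_m`: the literal `l_{i,j}` (for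
`1 ≤ i ≤ m`, `1 ≤ j ≤ 3`) mentions one of the variables `x₁, …, xₙ`. -/
def LitWF (n m : ℕ) (lit : ℕ → ℕ → Lit) : Prop :=
  ∀ i j, 1 ≤ i → i ≤ m → 1 ≤ j → j ≤ 3 → 1 ≤ (lit i j).var ∧ (lit i j).var ≤ n

/-- The clause `Fᵢ = (l_{i,1} ∨ l_{i,2} ∨ l_{i,3})` evaluates to true under `σ`. -/
def ClauseTrue (lit : ℕ → ℕ → Lit) (i : ℕ) (σ : ℕ → Bool) : Prop :=
  ∃ j, 1 ≤ j ∧ j ≤ 3 ∧ (lit i j).eval σ = true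

/-- The 3CNF formula `F = F₁ ∧ ⋯ ∧ F_m` evaluates to true under `σ`. -/
def FTrue (lit : ℕ → ℕ → Lit) (m : ℕ) (σ : ℕ → Bool) : Prop :=
  ∀ i, 1 ≤ i → i ≤ m → ClauseTrue lit i σ

/-- `QAux P i k σ`: the quantified statement with `k` variables `x_i, …, x_{i+k-1}`
still to be quantified (existentially when the index is odd, universally when even),
the remaining variables having the values recorded in `σ`. -/
def QAux (P : (ℕ → Bool) → Prop) : ℕ → ℕ → (ℕ → Bool) → Prop
  | _, 0, σ => P σ
  | i, k + 1, σ =>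
      if i % 2 = 1 then ∃ b, QAux P (i + 1) k (Function.update σ i b)
      else ∀ b, QAux P (i + 1) k (Function.update σ i b)

/-- Truth of the restricted quantified Boolean formula
`Q = ∃x₁ ∀x₂ ∃x₃ ⋯ ∀xₙ F(x₁, …, xₙ)`. -/
def QTrue (n m : ℕ) (lit : ℕ → ℕ → Lit) : Prop :=
  QAux (FTrue lit m) 1 n (fun _ => false)

/-- The vertices of the graph `G` built from `Q` (with natural-number indices;
`g 0` is the extra vertex `g₀`). -/
inductive Vtx where
  | a (i : ℕ) | b (i : ℕ) | c (i : ℕ) | d (i : ℕ) | e (i : ℕ) | f (i : ℕ) | g (i : ℕ)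
  | x (i : ℕ) | y (i : ℕ) | z (i : ℕ) | w (i : ℕ) (j : ℕ)
deriving DecidableEq

/-- A directed edge. -/
abbrev Edge := Vtx × Vtx

/-- The edge set `E(G)` of the graph `G` constructed from `Q` (with `n` variables and
`m` clauses): the variable components `G(xᵢ)`, the connecting edges `(gᵢ, aᵢ₊₁)` for
`i = 0, …, n-1`, the edge `(gₙ, x₁)`, and the formula component `G(F)`. -/
def EG (n m : ℕ) : Set Edge :=
  { p | (∃ i, 1 ≤ i ∧ i ≤ n ∧
          (p = (Vtx.a i, Vtx.b i) ∨ p = (Vtx.a i, Vtx.c i) ∨ p = (Vtx.b i, Vtx.e i) ∨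
           p = (Vtx.c i, Vtx.f i) ∨ p = (Vtx.e i, Vtx.d i) ∨ p = (Vtx.f i, Vtx.d i) ∨
           p = (Vtx.d i, Vtx.g i))) ∨
        (∃ i, i ≤ n - 1 ∧ p = (Vtx.g i, Vtx.a (i + 1))) ∨
        p = (Vtx.g n, Vtx.x 1) ∨
        (∃ i, 1 ≤ i ∧ i ≤ m ∧
          (p = (Vtx.x i, Vtx.y i) ∨ p = (Vtx.y i, Vtx.z i) ∨ p = (Vtx.z i, Vtx.w i 1) ∨
           p = (Vtx.w i 1, Vtx.w i 2) ∨ p = (Vtx.w i 2, Vtx.w i 3))) ∨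
        (∃ i, 1 ≤ i ∧ i ≤ m - 1 ∧ p = (Vtx.x i, Vtx.x (i + 1))) }

/-- The set `C = {g₀, g₁, …, g_{n-1}} ∪ {z₁, …, z_m}`. -/
def Cset (n m : ℕ) : Set Vtx :=
  { v | (∃ i, i ≤ n - 1 ∧ v = Vtx.g i) ∨ (∃ i, 1 ≤ i ∧ i ≤ m ∧ v = Vtx.z i) }

/-- The relation `R ⊆ V(G) × E(G)`: `(w_{i,j}, (bₗ, eₗ)) ∈ R` iff `l_{i,j} = xₗ`, and
`(w_{i,j}, (cₗ, fₗ)) ∈ R` iff `l_{i,j} = ¬xₗ`. -/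
def Rrel (lit : ℕ → ℕ → Lit) (m : ℕ) : Set (Vtx × Edge) :=
  { p | ∃ i j, 1 ≤ i ∧ i ≤ m ∧ 1 ≤ j ∧ j ≤ 3 ∧
        ((∃ l, lit i j = Lit.pos l ∧ p = (Vtx.w i j, (Vtx.b l, Vtx.e l))) ∨
         (∃ l, lit i j = Lit.neg l ∧ p = (Vtx.w i j, (Vtx.c l, Vtx.f l)))) }

/-- `Rinv R E = R⁻¹(E)`: the vertices pointing some edge of `E`. -/
def Rinv (R : Set (Vtx × Edge)) (E : Set Edge) : Set Vtx :=
  { v | ∃ e ∈ E, (v, e) ∈ R }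

/-- The set of (directed) edges traversed by a path given as its list of vertices. -/
def pathEdges (p : List Vtx) : Set Edge := { e | e ∈ p.zip p.tail }

/-- A legal move of the graph game from active vertex `u ∈ C` with current edge set `E`
along the directed path `p` (a list of at least two pairwise distinct vertices whose
consecutive pairs are edges of `E`), ending at a vertex `v ∈ C ∪ R⁻¹(E)`, with all
internal vertices of `p` outside `C ∪ R⁻¹(E)`; the resulting edge set `E'` is obtained
by deleting the edges of `p` from `E`. -/
def LegalMoveVia (C : Set Vtx) (R : Set (Vtx × Edge))
    (u : Vtx) (E : Set Edge) (v : Vtx) (E' : Set Edge) (p : List Vtx) : Prop :=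
  u ∈ C ∧ v ∈ C ∪ Rinv R E ∧
  2 ≤ p.length ∧ p.Nodup ∧
  p.head? = some u ∧ p.getLast? = some v ∧
  List.Chain' (fun a b => (a, b) ∈ E) p ∧
  (∀ w ∈ (p.drop 1).dropLast, w ∉ C ∪ Rinv R E) ∧
  E' = E \ pathEdges p

/-- A legal move from `(u, E)` to `(v, E')` (along some path). -/
def LegalMove (C : Set Vtx) (R : Set (Vtx × Edge))
    (u : Vtx) (E : Set Edge) (v : Vtx) (E' : Set Edge) : Prop :=
  ∃ p, LegalMoveVia C R u E v E' p

/-- `MoverWins C R true u E` says that the player to move at the position with active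
vertex `u` and current edge set `E` has a winning strategy; `MoverWins C R false u E`
says that the player to move loses whatever he does (in particular, if he has no legal
move he loses immediately; a move to a vertex of `R⁻¹(E)` wins the game for the mover). -/
inductive MoverWins (C : Set Vtx) (R : Set (Vtx × Edge)) : Bool → Vtx → Set Edge → Prop
  | winsNow {u E v E'} : LegalMove C R u E v E' → v ∈ Rinv R E →
      MoverWins C R true u E
  | winsLater {u E v E'} : LegalMove C R u E v E' → MoverWins C R false v E' →
      MoverWins C R true u E
  | loses {u E} :
      (∀ v E', LegalMove C R u E v E' → v ∉ Rinv R E) →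
      (∀ v E', LegalMove C R u E v E' → MoverWins C R true v E') →
      MoverWins C R false u E

/-- The two players of the graph game. -/
inductive Player where
  | ex | fa
deriving DecidableEq

/-- The opponent of a player. -/
def Player.other : Player → Player
  | .ex => .fa
  | .fa => .ex

/-- A (maximal) play of the graph game on `(G, C, s, R)` starting from active vertex `s`
and edge set `E0`, with the ∃-player moving first.  `act k` and `edg k` are the active
vertex and edge set after `k` moves, `turn k` is the player who makes the `(k+1)`-st
move, and `len` is the total number of moves.  The play stops either because its last
move reached a vertex of `R⁻¹(E)` (the mover wins) or because the player to move has no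
legal move (he loses); before that, no move may end in `R⁻¹(E)` without stopping. -/
structure Play (C : Set Vtx) (R : Set (Vtx × Edge)) (s : Vtx) (E0 : Set Edge) where
  len : ℕ
  act : ℕ → Vtx
  edg : ℕ → Set Edge
  turn : ℕ → Player
  init_act : act 0 = s
  init_edg : edg 0 = E0
  init_turn : turn 0 = Player.ex
  turn_alt : ∀ k, turn (k + 1) = (turn k).other
  step : ∀ k, k < len → LegalMove C R (act k) (edg k) (act (k + 1)) (edg (k + 1))
  not_over : ∀ k, k + 1 < len → act (k + 1) ∉ Rinv R (edg k)
  maximal : (0 < len ∧ act len ∈ Rinv R (edg (len - 1))) ∨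
            (∀ v E', ¬ LegalMove C R (act len) (edg len) v E')

/-!
Along a play from `g₀`, the position at `g_k` is `edgesAfter n m k σ`: `E(G)` without the
paths already taken through `G(x_1), …, G(x_k)`, the path through `G(x_l)` recording the
value `σ l`. For `k + 2 ≤ n` the only legal moves from `g_k` run through `G(x_{k+1})` to
`g_{k+1}`, one for each value of `x_{k+1}`, and none ends in `R⁻¹(E)`; so the player at
`g_k` chooses `x_{k+1}`, and the game alternates exactly as the quantifiers of `Q` do.
At `g_{n-1}` the ∀-player may instead run on from `g_n` along the formula component to any
`z_t`. From there the ∃-player can only reach `w_{t,1}, w_{t,2}, w_{t,3}`, none of which is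
in `C`, so to move at all he must reach some `w_{t,j} ∈ R⁻¹(E)`; the edge of `G(x_l)`
pointed at by `l_{t,j}` then survives, i.e. the path chosen for `x_l` avoided it, which
says that `l_{t,j}` is true.
-/

section AvoidingWalk

variable {α : Type*} {E : Set (α × α)} {S : Set α} {u v : α} {q : List α}

/-- `AvoidingWalk E S u q v`: the walk `u :: q` follows edges of `E`, ends at `v`, and its
internal vertices lie outside `S`. -/
inductive AvoidingWalk (E : Set (α × α)) (S : Set α) : α → List α → α → Prop
  | single {u v : α} : (u, v) ∈ E → AvoidingWalk E S u [v] v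
  | cons {u w v : α} {q : List α} :
      (u, w) ∈ E → w ∉ S → AvoidingWalk E S w q v → AvoidingWalk E S u (w :: q) v

theorem avoidingWalk_iff :
    AvoidingWalk E S u q v ↔ List.IsChain (fun a b => (a, b) ∈ E) (u :: q) ∧
      (∀ w ∈ q.dropLast, w ∉ S) ∧ q.getLast? = some v := by
  induction q generalizing u with
  | nil => exact ⟨nofun, by simp⟩
  | cons w q ih =>
    cases q with
    | nil =>
      constructor
      · rintro (he | ⟨-, -, ⟨⟩⟩)
        simpa using he
      · rintro ⟨hc, -, hv⟩
        obtain rfl : w = v := by simpa using hv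
        exact .single (List.isChain_cons_cons.1 hc).1
    | cons w' q =>
      rw [List.isChain_cons_cons, List.dropLast_cons_cons, List.getLast?_cons_cons,
        List.forall_mem_cons]
      constructor
      · rintro (_ | ⟨he, hw, h⟩)
        obtain ⟨hc, hd, hv⟩ := ih.1 h
        exact ⟨⟨he, hc⟩, ⟨hw, hd⟩, hv⟩
      · rintro ⟨⟨he, hc⟩, ⟨hw, hd⟩, hv⟩
        exact .cons he hw (ih.2 ⟨hc, hd, hv⟩)

theorem AvoidingWalk.append {q' : List α} {w : α} (h : AvoidingWalk E S u q v) (hv : v ∉ S)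
    (h' : AvoidingWalk E S v q' w) : AvoidingWalk E S u (q ++ q') w := by
  induction h with
  | single he => exact .cons he hv h'
  | cons he hw _ ih => exact .cons he hw (ih hv h')

theorem AvoidingWalk.exists_cons (h : AvoidingWalk E S u q v) (hv : v ∈ S)
    (hsucc : ∀ w, (u, w) ∈ E → w ∉ S) :
    ∃ w q', q = w :: q' ∧ (u, w) ∈ E ∧ AvoidingWalk E S w q' v := by
  cases h with
  | single he => exact absurd hv (hsucc v he)
  | cons he _ h' => exact ⟨_, _, rfl, he, h'⟩

theorem AvoidingWalk.eq_singleton (h : AvoidingWalk E S u q v)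
    (hsucc : ∀ w, (u, w) ∈ E → w ∈ S) : q = [v] ∧ (u, v) ∈ E := by
  cases h with
  | single he => exact ⟨rfl, he⟩
  | cons he hw _ => exact absurd (hsucc _ he) hw

theorem AvoidingWalk.last_mem {A : Set α} (h : AvoidingWalk E S u q v)
    (hu : ∀ w, (u, w) ∈ E → w ∈ A) (hA : ∀ a ∈ A, ∀ b, (a, b) ∈ E → b ∈ A) : v ∈ A := by
  induction h with
  | single he => exact hu _ he
  | cons he _ _ ih => exact ih (hA _ (hu _ he))

end AvoidingWalk

theorem legalMoveVia_iff {C : Set Vtx} {R : Set (Vtx × Edge)} {u v : Vtx} {E E' : Set Edge}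
    {p : List Vtx} :
    LegalMoveVia C R u E v E' p ↔ u ∈ C ∧ v ∈ C ∪ Rinv R E ∧ p.Nodup ∧
      E' = E \ pathEdges p ∧ ∃ q, p = u :: q ∧ AvoidingWalk E (C ∪ Rinv R E) u q v := by
  constructor
  · rintro ⟨hu, hv, hlen, hnd, hhead, hlast, hc, hint, hE'⟩
    obtain ⟨u', w, q, rfl⟩ : ∃ u' w q, p = u' :: w :: q := by
      match p, hlen with
      | u' :: w :: q, _ => exact ⟨u', w, q, rfl⟩
    obtain rfl : u' = u := by simpa using hhead
    rw [List.getLast?_cons_cons] at hlast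
    exact ⟨hu, hv, hnd, hE', _, rfl, avoidingWalk_iff.2 ⟨hc, by simpa using hint, hlast⟩⟩
  · rintro ⟨hu, hv, hnd, hE', q, rfl, hw⟩
    obtain ⟨hc, hint, hlast⟩ := avoidingWalk_iff.1 hw
    obtain ⟨w, q, rfl⟩ : ∃ w q', q = w :: q' := by
      cases q with
      | nil => simp at hlast
      | cons w q => exact ⟨w, q, rfl⟩
    refine ⟨hu, hv, by simp, hnd, rfl, ?_, hc, by simpa using hint, hE'⟩
    rwa [List.getLast?_cons_cons]

section Graph

variable {n m : ℕ} {lit : ℕ → ℕ → Lit}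

/-- The vertices that can never be in `C ∪ R⁻¹(E)`. -/
def Vtx.IsTransit : Vtx → Prop
  | .a _ | .b _ | .c _ | .d _ | .e _ | .f _ | .x _ | .y _ => True
  | _ => False

theorem notMem_Rinv_Rrel {v : Vtx} {E : Set Edge} (hv : ∀ i j, v ≠ Vtx.w i j) :
    v ∉ Rinv (Rrel lit m) E := by
  rintro ⟨_, -, i, j, -, -, -, -, ⟨l, -, h⟩ | ⟨l, -, h⟩⟩ <;>
    exact hv i j (Prod.mk.inj h).1

theorem notMem_Cset_union_Rinv_of_isTransit {v : Vtx} {E : Set Edge} (hv : v.IsTransit) :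
    v ∉ Cset n m ∪ Rinv (Rrel lit m) E := by
  refine fun h => h.elim (fun hC => ?_) (notMem_Rinv_Rrel ?_)
  · rcases hC with ⟨i, -, rfl⟩ | ⟨i, -, -, rfl⟩ <;> exact hv
  · rintro i j rfl; exact hv

theorem g_mem_Cset {k : ℕ} (hk : k < n) : Vtx.g k ∈ Cset n m :=
  Or.inl ⟨k, by omega, rfl⟩

theorem g_notMem_Cset_union_Rinv (hn : 1 ≤ n) {E : Set Edge} :
    Vtx.g n ∉ Cset n m ∪ Rinv (Rrel lit m) E := by
  refine fun h => h.elim (fun hC => ?_) (notMem_Rinv_Rrel (by simp))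
  simp [Cset] at hC
  omega

theorem w_notMem_Cset {i j : ℕ} : Vtx.w i j ∉ Cset n m := by
  simp [Cset]

theorem eq_a_of_g_mem_EG {k : ℕ} {v : Vtx} (hk : k < n) (h : (Vtx.g k, v) ∈ EG n m) :
    v = Vtx.a (k + 1) := by
  simp only [EG, Set.mem_ofPred_eq, Prod.mk.injEq] at h
  aesop

/-- `armIn l b`, `armOut l b`: the inner vertices of the arm of `G(x_l)` taken when `x_l`
gets the value `b`. The value `true` is encoded by the arm through `c_l`, which leaves the
edge `(b_l, e_l)` of the positive literal in place. -/
def armIn (l : ℕ) (b : Bool) : Vtx := bif b then .c l else .b l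

def armOut (l : ℕ) (b : Bool) : Vtx := bif b then .f l else .e l

theorem isTransit_armIn (l : ℕ) (b : Bool) : (armIn l b).IsTransit := by
  cases b <;> trivial

theorem isTransit_armOut (l : ℕ) (b : Bool) : (armOut l b).IsTransit := by
  cases b <;> trivial

theorem exists_armIn_of_a_mem_EG {l : ℕ} {v : Vtx} (h : (Vtx.a l, v) ∈ EG n m) :
    ∃ b, v = armIn l b := by
  simp only [EG, Set.mem_ofPred_eq, Prod.mk.injEq] at h
  rcases h with ⟨i, -, -, h⟩ | h | h | h | h <;> simp at h
  · rcases h with ⟨rfl, rfl⟩ | ⟨rfl, rfl⟩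
    exacts [⟨false, rfl⟩, ⟨true, rfl⟩]

theorem eq_armOut_of_armIn_mem_EG {l : ℕ} {b : Bool} {v : Vtx}
    (h : (armIn l b, v) ∈ EG n m) : v = armOut l b := by
  cases b <;> simp only [armIn, armOut, cond, EG, Set.mem_ofPred_eq, Prod.mk.injEq] at h ⊢ <;>
    aesop

theorem eq_d_of_armOut_mem_EG {l : ℕ} {b : Bool} {v : Vtx}
    (h : (armOut l b, v) ∈ EG n m) : v = Vtx.d l := by
  cases b <;> simp only [armOut, cond, EG, Set.mem_ofPred_eq, Prod.mk.injEq] at h <;> aesop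

theorem eq_g_of_d_mem_EG {l : ℕ} {v : Vtx} (h : (Vtx.d l, v) ∈ EG n m) : v = Vtx.g l := by
  simp only [EG, Set.mem_ofPred_eq, Prod.mk.injEq] at h
  aesop

theorem eq_w_of_z_mem_EG {t : ℕ} {v : Vtx} (h : (Vtx.z t, v) ∈ EG n m) : v = Vtx.w t 1 := by
  simp only [EG, Set.mem_ofPred_eq, Prod.mk.injEq] at h
  aesop

theorem eq_w_of_w_mem_EG {t j : ℕ} {v : Vtx} (h : (Vtx.w t j, v) ∈ EG n m) :
    j ≤ 2 ∧ v = Vtx.w t (j + 1) := by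
  simp only [EG, Set.mem_ofPred_eq, Prod.mk.injEq] at h
  aesop

end Graph

section Positions

variable {n m : ℕ} {lit : ℕ → ℕ → Lit}

/-- The move from `g_k` through `G(x_{k+1})` that gives `x_{k+1}` the value `b`. -/
def gadgetPath (k : ℕ) (b : Bool) : List Vtx :=
  [.g k, .a (k + 1), armIn (k + 1) b, armOut (k + 1) b, .d (k + 1), .g (k + 1)]

/-- The edge set after the moves through `G(x_1), …, G(x_k)` along the values of `σ`. -/
def edgesAfter (n m k : ℕ) (σ : ℕ → Bool) : Set Edge :=
  {e | e ∈ EG n m ∧ ∀ l < k, e ∉ pathEdges (gadgetPath l (σ (l + 1)))}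

/-- Edges out of `v` can lie only on the path through `G(x_l)` for `l = v.gadgetIndex`;
the indices `0` (formula component) and `n + 1` (for `g_n`) belong to no gadget. -/
def Vtx.gadgetIndex : Vtx → ℕ
  | .g i => i + 1
  | .a i | .b i | .c i | .d i | .e i | .f i => i
  | _ => 0

theorem gadgetIndex_of_mem_pathEdges_gadgetPath {l : ℕ} {b : Bool} {e : Edge}
    (h : e ∈ pathEdges (gadgetPath l b)) : e.1.gadgetIndex = l + 1 := by
  cases b <;> simp only [pathEdges, gadgetPath, armIn, armOut, cond, Set.mem_ofPred_eq,
    List.tail_cons, List.zip_cons_cons, List.zip_nil_right, List.mem_cons,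
    List.not_mem_nil, or_false] at h <;>
    rcases h with rfl | rfl | rfl | rfl | rfl <;> rfl

theorem mem_edgesAfter {k : ℕ} {σ : ℕ → Bool} {e : Edge} (he : e ∈ EG n m)
    (hk : e.1.gadgetIndex = 0 ∨ k < e.1.gadgetIndex) : e ∈ edgesAfter n m k σ :=
  ⟨he, fun l hl hp => by have := gadgetIndex_of_mem_pathEdges_gadgetPath hp; omega⟩

theorem edgesAfter_subset_EG {k : ℕ} {σ : ℕ → Bool} : edgesAfter n m k σ ⊆ EG n m :=
  fun _ he => he.1

theorem edgesAfter_zero (σ : ℕ → Bool) : edgesAfter n m 0 σ = EG n m := by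
  simp [edgesAfter]

theorem edgesAfter_diff_gadgetPath (k : ℕ) (σ : ℕ → Bool) (b : Bool) :
    edgesAfter n m k σ \ pathEdges (gadgetPath k b) =
      edgesAfter n m (k + 1) (Function.update σ (k + 1) b) := by
  ext e
  simp only [edgesAfter, Set.mem_sdiff, Set.mem_ofPred_eq, Nat.lt_succ_iff_lt_or_eq,
    or_imp, forall_and, forall_eq, Function.update_self, and_assoc]
  refine and_congr_right fun _ => and_congr_left fun _ => forall₂_congr fun l hl => ?_
  rw [Function.update_of_ne (by omega)]

theorem eq_not_of_arm_mem_edgesAfter {l : ℕ} {b : Bool} {σ : ℕ → Bool}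
    (h : (armIn l b, armOut l b) ∈ edgesAfter n m n σ) : σ l = !b := by
  obtain ⟨hEG, hfree⟩ := h
  obtain ⟨hl₁, hln⟩ : 1 ≤ l ∧ l ≤ n := by cases b <;> simpa [EG, armIn, armOut] using hEG
  have hpath := hfree (l - 1) (by omega)
  rw [Nat.sub_add_cancel hl₁] at hpath
  cases hσ : σ l <;> cases b <;> simp_all [pathEdges, gadgetPath]

theorem eval_eq_true_of_w_mem_Rinv {σ : ℕ → Bool} {E : Set Edge} {i j : ℕ}
    (hE : E ⊆ edgesAfter n m n σ) (h : Vtx.w i j ∈ Rinv (Rrel lit m) E) :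
    (lit i j).eval σ = true := by
  obtain ⟨e, he, i', j', -, -, -, -, ⟨l, hl, h⟩ | ⟨l, hl, h⟩⟩ := h <;>
    obtain ⟨⟨rfl, rfl⟩, rfl⟩ : (i = i' ∧ j = j') ∧ e = _ := by simpa using h
  · simp [Lit.eval, hl, eq_not_of_arm_mem_edgesAfter (b := false) (hE he)]
  · simp [Lit.eval, hl, eq_not_of_arm_mem_edgesAfter (b := true) (hE he)]

end Positions

section Moves

variable {n m : ℕ} {lit : ℕ → ℕ → Lit}

theorem avoidingWalk_gadgetPath {k : ℕ} {σ : ℕ → Bool} {b : Bool} {S : Set Vtx} (hk : k < n)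
    (hS : ∀ v, v.IsTransit → v ∉ S) :
    AvoidingWalk (edgesAfter n m k σ) S (.g k) (gadgetPath k b).tail (.g (k + 1)) := by
  refine .cons ?_ (hS _ trivial) (.cons ?_ (hS _ (isTransit_armIn _ _))
    (.cons ?_ (hS _ (isTransit_armOut _ _)) (.cons ?_ (hS _ trivial) (.single ?_)))) <;>
  refine mem_edgesAfter ?_ (.inr ?_) <;>
  cases b <;> simp [EG, Vtx.gadgetIndex, armIn, armOut] <;> omega

theorem legalMove_g_iff {k : ℕ} {σ : ℕ → Bool} {v : Vtx} {E' : Set Edge} (hk : k + 2 ≤ n) :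
    LegalMove (Cset n m) (Rrel lit m) (.g k) (edgesAfter n m k σ) v E' ↔
      ∃ b, v = .g (k + 1) ∧ E' = edgesAfter n m (k + 1) (Function.update σ (k + 1) b) := by
  have transit : ∀ w : Vtx, w.IsTransit →
      w ∉ Cset n m ∪ Rinv (Rrel lit m) (edgesAfter n m k σ) :=
    fun _ => notMem_Cset_union_Rinv_of_isTransit
  have hE : edgesAfter n m k σ ⊆ EG n m := edgesAfter_subset_EG
  constructor
  · rintro ⟨p, hp⟩
    obtain ⟨-, hv, -, rfl, q, rfl, h⟩ := legalMoveVia_iff.1 hp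
    obtain ⟨_, q, rfl, he, h⟩ := h.exists_cons hv fun w he => by
      rw [eq_a_of_g_mem_EG (by omega) (hE he)]; exact transit _ trivial
    obtain rfl := eq_a_of_g_mem_EG (by omega) (hE he)
    obtain ⟨_, q, rfl, he, h⟩ := h.exists_cons hv fun w he => by
      obtain ⟨b, rfl⟩ := exists_armIn_of_a_mem_EG (hE he)
      exact transit _ (isTransit_armIn _ _)
    obtain ⟨b, rfl⟩ := exists_armIn_of_a_mem_EG (hE he)
    obtain ⟨_, q, rfl, he, h⟩ := h.exists_cons hv fun w he => by
      rw [eq_armOut_of_armIn_mem_EG (hE he)]; exact transit _ (isTransit_armOut _ _)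
    obtain rfl := eq_armOut_of_armIn_mem_EG (hE he)
    obtain ⟨_, q, rfl, he, h⟩ := h.exists_cons hv fun w he => by
      rw [eq_d_of_armOut_mem_EG (hE he)]; exact transit _ trivial
    obtain rfl := eq_d_of_armOut_mem_EG (hE he)
    obtain ⟨rfl, he⟩ := h.eq_singleton fun w he => by
      rw [eq_g_of_d_mem_EG (hE he)]; exact .inl (g_mem_Cset (by omega))
    obtain rfl := eq_g_of_d_mem_EG (hE he)
    exact ⟨b, rfl, edgesAfter_diff_gadgetPath k σ b⟩
  · rintro ⟨b, rfl, rfl⟩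
    refine ⟨gadgetPath k b, legalMoveVia_iff.2 ⟨g_mem_Cset (by omega),
      .inl (g_mem_Cset (by omega)), ?_, (edgesAfter_diff_gadgetPath k σ b).symm, _, rfl,
      avoidingWalk_gadgetPath (by omega) transit⟩⟩
    cases b <;> simp [gadgetPath, armIn, armOut]

end Moves

section FinalMove

variable {n m : ℕ} {lit : ℕ → ℕ → Lit}

def spine (t : ℕ) : List Vtx := (List.range' 1 t).map .x ++ [.y t, .z t]

/-- The last move of the ∀-player, which sets `x_{k+1}` to `b` and chooses the clause `t`. -/
def finalPath (k : ℕ) (b : Bool) (t : ℕ) : List Vtx := gadgetPath k b ++ spine t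

theorem avoidingWalk_spine {k t : ℕ} {σ : ℕ → Bool} {S : Set Vtx} (hk : k ≤ n) (ht : 1 ≤ t)
    (htm : t ≤ m) (hS : ∀ v, v.IsTransit → v ∉ S) :
    AvoidingWalk (edgesAfter n m k σ) S (.g n) (spine t) (.z t) := by
  have formula : ∀ e ∈ EG n m, e.1.gadgetIndex = 0 → e ∈ edgesAfter n m k σ :=
    fun e he h => mem_edgesAfter he (.inl h)
  have along : ∀ d s, 1 ≤ s → s + d ≤ m → AvoidingWalk (edgesAfter n m k σ) S (.x s)
      ((List.range' (s + 1) d).map .x ++ [.y (s + d), .z (s + d)]) (.z (s + d)) := by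
    intro d
    induction d with
    | zero =>
      intro s hs hsm
      exact .cons (formula _ (by simp [EG]; omega) rfl) (hS _ trivial)
        (.single (formula _ (by simp [EG]; omega) rfl))
    | succ d ih =>
      intro s hs hsm
      have h := ih (s + 1) (by omega) (by omega)
      rw [show s + 1 + d = s + (d + 1) by omega] at h
      rw [List.range'_succ, List.map_cons, List.cons_append]
      exact .cons (formula _ (by simp [EG]; omega) rfl) (hS _ trivial) h
  obtain ⟨d, rfl⟩ : ∃ d, t = d + 1 := ⟨t - 1, by omega⟩
  have h := along d 1 le_rfl (by omega)
  rw [add_comm 1 d] at h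
  rw [spine, List.range'_succ, List.map_cons, List.cons_append]
  exact .cons (mem_edgesAfter (by simp [EG]) (.inr (by simp [Vtx.gadgetIndex]; omega)))
    (hS _ trivial) h

theorem legalMoveVia_finalPath {k t : ℕ} (hk : k + 1 = n) (ht : 1 ≤ t) (htm : t ≤ m)
    (σ : ℕ → Bool) (b : Bool) :
    LegalMoveVia (Cset n m) (Rrel lit m) (.g k) (edgesAfter n m k σ) (.z t)
      (edgesAfter n m k σ \ pathEdges (finalPath k b t)) (finalPath k b t) := by
  have transit : ∀ w : Vtx, w.IsTransit →
      w ∉ Cset n m ∪ Rinv (Rrel lit m) (edgesAfter n m k σ) :=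
    fun _ => notMem_Cset_union_Rinv_of_isTransit
  refine legalMoveVia_iff.2 ⟨g_mem_Cset (by omega), .inl (.inr ⟨t, ht, htm, rfl⟩), ?_, rfl,
    _, rfl, ?_⟩
  · have : ((List.range' 1 t).map Vtx.x).Nodup :=
      (List.nodup_range' _).map fun _ _ => Vtx.x.inj
    cases b <;> simp [finalPath, gadgetPath, spine, armIn, armOut, List.nodup_append, this] <;>
      rintro _ _ - - rfl <;> simp
  · subst hk
    exact (avoidingWalk_gadgetPath (by omega) transit).append
      (g_notMem_Cset_union_Rinv (by omega)) (avoidingWalk_spine (by omega) ht htm transit)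

theorem pathEdges_subset_append (l₁ l₂ : List Vtx) : pathEdges l₁ ⊆ pathEdges (l₁ ++ l₂) := by
  induction l₁ with
  | nil => simp [pathEdges]
  | cons a l ih =>
    cases l with
    | nil => simp [pathEdges]
    | cons b l =>
      intro e he
      simp only [pathEdges, Set.mem_ofPred_eq, List.cons_append, List.tail_cons,
        List.zip_cons_cons, List.mem_cons] at he ⊢
      exact he.imp_right fun h => ih h

theorem diff_pathEdges_finalPath_subset {k t : ℕ} {σ : ℕ → Bool} {b : Bool} :
    edgesAfter n m k σ \ pathEdges (finalPath k b t) ⊆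
      edgesAfter n m (k + 1) (Function.update σ (k + 1) b) := by
  rw [← edgesAfter_diff_gadgetPath]
  exact Set.sdiff_subset_sdiff_right (pathEdges_subset_append _ _)

end FinalMove

section Game

variable {n m : ℕ} {lit : ℕ → ℕ → Lit}

theorem clauseTrue_of_moverWins_z {t : ℕ} {σ : ℕ → Bool} {E : Set Edge}
    (hE : E ⊆ edgesAfter n m n σ) (h : MoverWins (Cset n m) (Rrel lit m) true (.z t) E) :
    ClauseTrue lit t σ := by
  obtain ⟨v, E', p, hp⟩ : ∃ v E', LegalMove (Cset n m) (Rrel lit m) (.z t) E v E' := by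
    cases h with
    | winsNow hmove _ => exact ⟨_, _, hmove⟩
    | winsLater hmove _ => exact ⟨_, _, hmove⟩
  obtain ⟨-, hv, -, -, q, rfl, hw⟩ := legalMoveVia_iff.1 hp
  have hEG : E ⊆ EG n m := hE.trans edgesAfter_subset_EG
  obtain ⟨j, hj₁, hj₃, rfl⟩ : ∃ j, 1 ≤ j ∧ j ≤ 3 ∧ v = .w t j := by
    refine hw.last_mem (A := {v | ∃ j, 1 ≤ j ∧ j ≤ 3 ∧ v = .w t j})
      (fun w he => ⟨1, le_rfl, by omega, eq_w_of_z_mem_EG (hEG he)⟩) ?_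
    rintro _ ⟨j, hj₁, -, rfl⟩ w he
    obtain ⟨hj₂, rfl⟩ := eq_w_of_w_mem_EG (hEG he)
    exact ⟨j + 1, by omega, by omega, rfl⟩
  exact ⟨j, hj₁, hj₃, eval_eq_true_of_w_mem_Rinv hE (hv.resolve_left w_notMem_Cset)⟩

theorem exists_moverWins_false_of_moverWins_true {k : ℕ} {σ : ℕ → Bool} (hk : k + 2 ≤ n)
    (h : MoverWins (Cset n m) (Rrel lit m) true (.g k) (edgesAfter n m k σ)) :
    ∃ b, MoverWins (Cset n m) (Rrel lit m) false (.g (k + 1))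
      (edgesAfter n m (k + 1) (Function.update σ (k + 1) b)) := by
  cases h with
  | winsNow hmove hv =>
    obtain ⟨b, rfl, -⟩ := (legalMove_g_iff hk).1 hmove
    exact absurd hv (notMem_Rinv_Rrel (by simp))
  | winsLater hmove hw =>
    obtain ⟨b, rfl, rfl⟩ := (legalMove_g_iff hk).1 hmove
    exact ⟨b, hw⟩

theorem moverWins_true_of_moverWins_false {k : ℕ} {σ : ℕ → Bool} (hk : k + 2 ≤ n)
    (h : MoverWins (Cset n m) (Rrel lit m) false (.g k) (edgesAfter n m k σ)) (b : Bool) :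
    MoverWins (Cset n m) (Rrel lit m) true (.g (k + 1))
      (edgesAfter n m (k + 1) (Function.update σ (k + 1) b)) := by
  cases h with
  | loses _ hwin => exact hwin _ _ ((legalMove_g_iff hk).2 ⟨b, rfl, rfl⟩)

theorem fTrue_of_moverWins_false {k : ℕ} {σ : ℕ → Bool} (hk : k + 1 = n)
    (h : MoverWins (Cset n m) (Rrel lit m) false (.g k) (edgesAfter n m k σ)) (b : Bool) :
    FTrue lit m (Function.update σ (k + 1) b) := by
  intro t ht htm
  cases h with
  | loses _ hwin =>
    have hz := hwin _ _ ⟨_, legalMoveVia_finalPath hk ht htm σ b⟩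
    subst hk
    exact clauseTrue_of_moverWins_z diff_pathEdges_finalPath_subset hz

/-- The player to move at `g_k` is the ∃-player exactly when `k` is even. -/
theorem qAux_of_moverWins (hn : Even n) {d k : ℕ} {σ : ℕ → Bool} (hkd : k + d + 1 = n)
    (h : MoverWins (Cset n m) (Rrel lit m) (decide (Even k)) (.g k) (edgesAfter n m k σ)) :
    QAux (FTrue lit m) (k + 1) (d + 1) σ := by
  induction d generalizing k σ with
  | zero =>
    have hk1 : Even (k + 1) := hkd ▸ hn
    rw [decide_eq_false (Nat.even_add_one.1 hk1)] at h
    rw [QAux, if_neg (by have := Nat.even_iff.1 hk1; omega)]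
    exact fun b => fTrue_of_moverWins_false hkd h b
  | succ d ih =>
    rcases Nat.even_or_odd k with hk | hk
    · rw [decide_eq_true hk] at h
      obtain ⟨b, hb⟩ := exists_moverWins_false_of_moverWins_true (by omega) h
      rw [QAux, if_pos (Nat.odd_iff.1 hk.add_one)]
      exact ⟨b, ih (by omega) (by rwa [decide_eq_false (Nat.not_even_iff_odd.2 hk.add_one)])⟩
    · rw [decide_eq_false (Nat.not_even_iff_odd.2 hk)] at h
      rw [QAux, if_neg (by have := Nat.even_iff.1 hk.add_one; omega)]
      refine fun b => ih (by omega) ?_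
      rw [decide_eq_true hk.add_one]
      exact moverWins_true_of_moverWins_false (by omega) h b

end Game

theorem qbf_true_of_existsPlayer_wins_general
    (n m : ℕ) (hn : Even n) (hn2 : 2 ≤ n)
    (lit : ℕ → ℕ → Lit)
    (hwin : MoverWins (Cset n m) (Rrel lit m) true (Vtx.g 0) (EG n m)) :
    QTrue n m lit := by
  obtain ⟨d, rfl⟩ : ∃ d, n = d + 1 := ⟨n - 1, by omega⟩
  exact qAux_of_moverWins hn (by omega) (by simpa [edgesAfter_zero] using hwin)

/-- If the ∃-player (who moves first, from `s = g₀`, with initial edge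
set `E(G)`) has a winning strategy in the graph game on `(G, C, s, R)` constructed from
the restricted quantified Boolean formula `Q`, then `Q` is true. -/
theorem qbf_true_of_existsPlayer_wins
    (n m : ℕ) (hn : Even n) (hn2 : 2 ≤ n) (hm : 1 ≤ m)
    (lit : ℕ → ℕ → Lit) (hwf : LitWF n m lit)
    (hwin : MoverWins (Cset n m) (Rrel lit m) true (Vtx.g 0) (EG n m)) :
    QTrue n m lit :=
  qbf_true_of_existsPlayer_wins_general n m hn hn2 lit hwin

end PhutballQBF
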